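/- Let k ≥ 1 and let J be an ideal of the polynomial ring ℂ[x,y] such that x^k ∈ J and J is homogeneous with respect to the ℤ-grading of ℂ[x,y] with deg x = 1 and deg y = −1. Then J is generated by monomials, i.e., there exists a set S of monomials x^a y^b such that J is the ideal generated by S. -/
import Mathlib


open MvPolynomial

/-- The weight function on `ℂ[x,y]` giving `x = X 0` weight `1` and `y = X 1`
weight `−1`. -/
def wt : Fin 2 → ℤ := ![1, -1]

lemma wt_weight (s : Fin 2 →₀ ℕ) : Finsupp.weight wt s = (s 0 : ℤ) - s 1 := by
  rw [Finsupp.weight_apply, Finsupp.sum_fintype _ _ (by intro i; simp)]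
  simp [wt, Fin.sum_univ_two, sub_eq_add_neg]

lemma mono_dvd_mem (k : ℕ) (J : Ideal (MvPolynomial (Fin 2) ℂ))
    (hx : (X 0 : MvPolynomial (Fin 2) ℂ) ^ k ∈ J) (u : Fin 2 →₀ ℕ) (hu : k ≤ u 0) :
    monomial u (1:ℂ) ∈ J := by
  have h : u = Finsupp.single 0 k + (u - Finsupp.single 0 k) := by
    ext i
    fin_cases i <;> simp [Finsupp.single_apply]
    omega
  rw [h, ← one_mul (1:ℂ), ← monomial_mul, ← X_pow_eq_monomial]
  exact Ideal.mul_mem_right _ _ hx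

lemma lowest_mono_mem (k : ℕ) (J : Ideal (MvPolynomial (Fin 2) ℂ))
    (hx : (X 0 : MvPolynomial (Fin 2) ℂ) ^ k ∈ J)
    (f : MvPolynomial (Fin 2) ℂ) (hfJ : f ∈ J) (d : ℤ)
    (hf : f.IsWeightedHomogeneous wt d) (s : Fin 2 →₀ ℕ) (hs : coeff s f ≠ 0)
    (hmin : ∀ s' ∈ f.support, s 0 ≤ s' 0) :
    monomial s (1:ℂ) ∈ J := by
  set t : Fin 2 →₀ ℕ := Finsupp.single 0 1 + Finsupp.single 1 1 with ht
  have hkey : ∀ m : ℕ, ∀ j : ℕ, k ≤ s 0 + j + m → monomial (s + j • t) (1:ℂ) ∈ J := by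
    intro m
    induction m with
    | zero =>
      intro j hj
      apply mono_dvd_mem k J hx
      simp [ht, Finsupp.single_apply]
      omega
    | succ m ih =>
      intro j hj
      by_cases hcase : k ≤ s 0 + j
      · apply mono_dvd_mem k J hx
        simp [ht, Finsupp.single_apply]
        omega
      · push_neg at hcase
        have hgJ : monomial (j • t) (1:ℂ) * f ∈ J := Ideal.mul_mem_left _ _ hfJ
        have hg : monomial (j • t) (1:ℂ) * f
            = ∑ s' ∈ f.support, monomial (s' + j • t) (coeff s' f) := by
          conv_lhs => rw [f.as_sum]
          rw [Finset.mul_sum]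
          apply Finset.sum_congr rfl
          intro s' _
          rw [monomial_mul, one_mul, add_comm]
        have hsum : ∑ s' ∈ f.support, monomial (s' + j • t) (coeff s' f)
            = monomial (s + j • t) (coeff s f)
              + ∑ s' ∈ f.support.erase s, monomial (s' + j • t) (coeff s' f) :=
          (Finset.add_sum_erase _ _ (mem_support_iff.mpr hs)).symm
        have herase : ∑ s' ∈ f.support.erase s, monomial (s' + j • t) (coeff s' f) ∈ J := by
          apply Ideal.sum_mem
          intro s' hs'
          obtain ⟨hne, hmem⟩ := Finset.mem_erase.mp hs'
          have h1 : s 0 ≤ s' 0 := hmin s' hmem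
          have hd1 : (s' 0 : ℤ) - s' 1 = (s 0 : ℤ) - s 1 := by
            rw [← wt_weight, ← wt_weight, hf (mem_support_iff.mp hmem), hf hs]
          have h2 : s 0 < s' 0 := by
            rcases lt_or_eq_of_le h1 with h | h
            · exact h
            · exfalso; apply hne
              have e1 : s' 1 = s 1 := by omega
              ext i
              fin_cases i
              · exact h.symm
              · exact e1
          set e := s' 0 - s 0 with he
          have h10 : s' 0 = s 0 + e := by omega
          have h11 : s' 1 = s 1 + e := by omega
          have hrw : s' + j • t = s + (j + e) • t := by
            ext i
            fin_cases i <;>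
              simp only [ht, Fin.mk_zero, Fin.mk_one, Fin.isValue, Finsupp.add_apply,
                Finsupp.smul_apply, Finsupp.single_apply, smul_eq_mul] <;>
              simp [h10, h11] <;> ring
          rw [hrw]
          have : monomial (s + (j + e) • t) (coeff s' f)
              = C (coeff s' f) * monomial (s + (j + e) • t) (1:ℂ) := by
            rw [C_mul_monomial, mul_one]
          rw [this]
          exact Ideal.mul_mem_left _ _ (ih (j + e) (by omega))
        have hc0 : monomial (s + j • t) (coeff s f) ∈ J := by
          have : monomial (s + j • t) (coeff s f)
              = monomial (j • t) (1:ℂ) * f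
                - ∑ s' ∈ f.support.erase s, monomial (s' + j • t) (coeff s' f) := by
            rw [hg, hsum]; ring
          rw [this]
          exact Submodule.sub_mem _ hgJ herase
        have : monomial (s + j • t) (1:ℂ)
            = C (coeff s f)⁻¹ * monomial (s + j • t) (coeff s f) := by
          rw [C_mul_monomial, inv_mul_cancel₀ hs]
        rw [this]
        exact Ideal.mul_mem_left _ _ hc0
  have := hkey k 0 (by omega)
  simpa using this

lemma homog_mem_span (k : ℕ) (J : Ideal (MvPolynomial (Fin 2) ℂ))
    (hx : (X 0 : MvPolynomial (Fin 2) ℂ) ^ k ∈ J) (n : ℕ) :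
    ∀ f ∈ J, ∀ d : ℤ, f.IsWeightedHomogeneous wt d → f.support.card ≤ n →
    f ∈ Ideal.span {g : MvPolynomial (Fin 2) ℂ |
      (∃ a b : ℕ, g = (X 0 : MvPolynomial (Fin 2) ℂ) ^ a * X 1 ^ b) ∧ g ∈ J} := by
  induction n with
  | zero =>
    intro f hfJ d hf hcard
    have : f = 0 := by
      rwa [Nat.le_zero, Finset.card_eq_zero, support_eq_empty] at hcard
    simp [this]
  | succ n ih =>
    intro f hfJ d hf hcard
    by_cases hf0 : f = 0
    · simp [hf0]
    · have hne : f.support.Nonempty := Finset.nonempty_iff_ne_empty.mpr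
        (fun h => hf0 (support_eq_empty.mp h))
      obtain ⟨s, hsmem, hsmin⟩ := Finset.exists_min_image f.support (fun u => u 0) hne
      have hcs : coeff s f ≠ 0 := mem_support_iff.mp hsmem
      have hmJ : monomial s (1:ℂ) ∈ J :=
        lowest_mono_mem k J hx f hfJ d hf s hcs hsmin
      have hmS : monomial s (1:ℂ) ∈ Ideal.span {g : MvPolynomial (Fin 2) ℂ |
          (∃ a b : ℕ, g = (X 0 : MvPolynomial (Fin 2) ℂ) ^ a * X 1 ^ b) ∧ g ∈ J} := by
        apply Ideal.subset_span
        refine ⟨⟨s 0, s 1, ?_⟩, hmJ⟩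
        rw [monomial_eq, Finsupp.prod_fintype _ _ (by intro i; simp)]
        simp [Fin.prod_univ_two]
      set f' := f - monomial s (coeff s f) with hf'
      have hf'J : f' ∈ J := by
        apply Submodule.sub_mem _ hfJ
        have : monomial s (coeff s f) = C (coeff s f) * monomial s (1:ℂ) := by
          rw [C_mul_monomial, mul_one]
        rw [this]
        exact Ideal.mul_mem_left _ _ hmJ
      have hf'hom : f'.IsWeightedHomogeneous wt d := by
        have h1 : f ∈ weightedHomogeneousSubmodule ℂ wt d := hf
        have h2 : monomial s (coeff s f) ∈ weightedHomogeneousSubmodule ℂ wt d := by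
          rw [mem_weightedHomogeneousSubmodule]
          exact isWeightedHomogeneous_monomial wt s (coeff s f) (hf hcs)
        exact Submodule.sub_mem _ h1 h2
      have hsupp : f'.support ⊆ f.support.erase s := by
        intro u hu
        rw [mem_support_iff] at hu
        simp only [hf', coeff_sub, coeff_monomial] at hu
        rw [Finset.mem_erase, mem_support_iff]
        split_ifs at hu with h
        · subst h; simp at hu
        · exact ⟨fun he => h he.symm, by simpa using hu⟩
      have hcard' : f'.support.card ≤ n := by
        have := Finset.card_le_card hsupp
        have := Finset.card_erase_lt_of_mem hsmem
        omega
      have hf'span := ih f' hf'J d hf'hom hcard'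
      have : f = f' + C (coeff s f) * monomial s (1:ℂ) := by
        rw [C_mul_monomial, mul_one, hf']; ring
      rw [this]
      exact Submodule.add_mem _ hf'span (Ideal.mul_mem_left _ _ hmS)

/-- Let `k ≥ 1` and let `J` be an ideal of `ℂ[x,y]` containing `x^k`
and homogeneous with respect to the `ℤ`-grading with `deg x = 1`, `deg y = −1`
(i.e. closed under taking weighted-homogeneous components).  Then `J` is generated by
monomials. -/
theorem homogeneous_ideal_monomial_generated (k : ℕ) (hk : 1 ≤ k)
    (J : Ideal (MvPolynomial (Fin 2) ℂ))
    (hx : (X 0 : MvPolynomial (Fin 2) ℂ) ^ k ∈ J)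
    (hhom : ∀ f ∈ J, ∀ d : ℤ, weightedHomogeneousComponent wt d f ∈ J) :
    ∃ S : Set (MvPolynomial (Fin 2) ℂ),
      (∀ g ∈ S, ∃ a b : ℕ, g = (X 0 : MvPolynomial (Fin 2) ℂ) ^ a * X 1 ^ b) ∧
      J = Ideal.span S := by
  refine ⟨{g : MvPolynomial (Fin 2) ℂ |
      (∃ a b : ℕ, g = (X 0 : MvPolynomial (Fin 2) ℂ) ^ a * X 1 ^ b) ∧ g ∈ J},
    fun g hg => hg.1, le_antisymm ?_ ?_⟩
  · intro f hfJ
    have hfin := weightedHomogeneousComponent_finsupp (w := wt) f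
    have hsum : f = ∑ d ∈ hfin.toFinset, weightedHomogeneousComponent wt d f := by
      conv_lhs => rw [← sum_weightedHomogeneousComponent wt f]
      exact finsum_eq_sum _ hfin
    rw [hsum]
    apply Submodule.sum_mem
    intro d _
    exact homog_mem_span k J hx _ _ (hhom f hfJ d) d
      (weightedHomogeneousComponent_isWeightedHomogeneous d f) le_rfl
  · rw [Ideal.span_le]
    exact fun g hg => hg.2
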